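/- arXiv:0903.1785 — 4 statements merged into one kernel-verified Lean document; each statement's English description precedes it below -/
import Mathlib

section
/- Let S be a semigroup and a, d, b ∈ S. Suppose there is an idempotent e in the R-class of d such that b is both an inner and outer inverse of ae and b H d. Then there exists an idempotent f in the L-class of d such that b is both an inner and outer inverse of fa. -/
variable {S : Type*} [Semigroup S]

/-- `x` is below `y` in the L-preorder: `x ∈ S¹y`. -/
def lle (x y : S) : Prop := x = y ∨ ∃ s, x = s * y
/-- `x` is below `y` in the R-preorder: `x ∈ yS¹`. -/
def rle (x y : S) : Prop := x = y ∨ ∃ s, x = y * s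
/-- Green's L relation: `S¹x = S¹y`. -/
def lrel (x y : S) : Prop := lle x y ∧ lle y x
/-- Green's R relation: `xS¹ = yS¹`. -/
def rrel (x y : S) : Prop := rle x y ∧ rle y x
/-- Green's H relation. -/
def hrel (x y : S) : Prop := lrel x y ∧ rrel x y
/-- `b` is an inverse of `a` along `d`. -/
def invAlong (a d b : S) : Prop :=
  b * a * d = d ∧ d * a * b = d ∧ (∃ s, b = d * s) ∧ (∃ t, b = t * d)
/-- The H-class of `x`. -/
def hClass (x : S) : Set S := {y | hrel y x}
/-- A subset of `S` is a group under the restricted multiplication. -/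
def isGroupSet (H : Set S) : Prop :=
  (∀ x ∈ H, ∀ y ∈ H, x * y ∈ H) ∧
  ∃ e ∈ H, (∀ x ∈ H, e * x = x ∧ x * e = x) ∧ ∀ x ∈ H, ∃ y ∈ H, x * y = e ∧ y * x = e


/-! An idempotent `e` acts as a left identity on its R-class, so `b H d R e` gives `e * b = b`
and the outer-inverse equation for `a * e` collapses to `b * (a * b) = b`. Then `f = a * b`
is an idempotent L-related to `b`, hence to `d`, and `b` is an inner and outer inverse of `f * a`. -/

theorem rle_trans {x y z : S} (hxy : rle x y) (hyz : rle y z) : rle x z := by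
  rcases hxy with rfl | ⟨s, rfl⟩
  · exact hyz
  · rcases hyz with rfl | ⟨t, rfl⟩
    · exact Or.inr ⟨s, rfl⟩
    · exact Or.inr ⟨t * s, mul_assoc _ _ _⟩

theorem lle_trans {x y z : S} (hxy : lle x y) (hyz : lle y z) : lle x z := by
  rcases hxy with rfl | ⟨s, rfl⟩
  · exact hyz
  · rcases hyz with rfl | ⟨t, rfl⟩
    · exact Or.inr ⟨s, rfl⟩
    · exact Or.inr ⟨s * t, (mul_assoc _ _ _).symm⟩

theorem lrel_trans {x y z : S} (hxy : lrel x y) (hyz : lrel y z) : lrel x z :=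
  ⟨lle_trans hxy.1 hyz.1, lle_trans hyz.2 hxy.2⟩

theorem lrel_mul_of_mul_mul_eq {a b : S} (h : b * (a * b) = b) : lrel (a * b) b :=
  ⟨Or.inr ⟨a, rfl⟩, Or.inr ⟨b, h.symm⟩⟩

theorem mul_eq_self_of_rle_of_mul_self {e x : S} (he : e * e = e) (h : rle x e) : e * x = x := by
  rcases h with rfl | ⟨s, rfl⟩
  · exact he
  · rw [← mul_assoc, he]

theorem mul_self_of_mul_mul_eq {a b : S} (h : b * (a * b) = b) : a * b * (a * b) = a * b := by
  rw [mul_assoc, h]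

theorem inner_outer_inverse_of_mul_mul_eq {a b : S} (h : b * (a * b) = b) :
    a * b * a * b * (a * b * a) = a * b * a ∧ b * (a * b * a) * b = b := by
  have hcancel : ∀ y : S, b * (a * (b * y)) = b * y := fun y => by
    rw [← mul_assoc a, ← mul_assoc, h]
  constructor
  · simp only [mul_assoc]
    rw [hcancel, hcancel]
  · simp only [mul_assoc]
    rw [hcancel, h]

theorem stmt2_general (a d b e : S) (he : e * e = e) (hed : rrel e d)
    (ho : b * (a * e) * b = b) (hbd : hrel b d) :
    ∃ f, f * f = f ∧ lrel f d ∧ (f * a) * b * (f * a) = f * a ∧ b * (f * a) * b = b := by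
  obtain ⟨hbd_l, hbd_r⟩ := hbd
  have heb : e * b = b := mul_eq_self_of_rle_of_mul_self he (rle_trans hbd_r.1 hed.2)
  have hbab : b * (a * b) = b := by
    rwa [mul_assoc, mul_assoc, heb] at ho
  exact ⟨a * b, mul_self_of_mul_mul_eq hbab, lrel_trans (lrel_mul_of_mul_mul_eq hbab) hbd_l,
    inner_outer_inverse_of_mul_mul_eq hbab⟩

theorem stmt2 (a d b e : S) (he : e * e = e) (hed : rrel e d)
    (hi : (a * e) * b * (a * e) = a * e) (ho : b * (a * e) * b = b) (hbd : hrel b d) :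
    ∃ f, f * f = f ∧ lrel f d ∧ (f * a) * b * (f * a) = f * a ∧ b * (f * a) * b = b :=
  stmt2_general a d b e he hed ho hbd
end

section
/- Let S be a semigroup and a, d ∈ S. If ad L d and the H-class of ad is a group, then da R d and the H-class of da is a group. -/
/-!
Let `e` be the identity of the group `H_{ad}` and `c` the inverse of `ad` there. Since `d L ad L e`
and `e` is idempotent, `de = d`, so `b = dc` satisfies `bad = dead = d` and `dab = d(ad)c = d`,
and `b ∈ S¹d ∩ dS¹`: it is the inverse of `a` along `d`. Then `ba` is idempotent and
H-related to `da`, and `da R d`, so Green's theorem applies to the H-class of `ba`.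
-/

variable {S : Type*} [Semigroup S]

section Preorders

variable {x y z : S}

theorem lle.trans (h₁ : lle x y) (h₂ : lle y z) : lle x z := by
  rcases h₁ with rfl | ⟨s, rfl⟩
  · exact h₂
  · rcases h₂ with rfl | ⟨t, rfl⟩
    · exact Or.inr ⟨s, rfl⟩
    · exact Or.inr ⟨s * t, (mul_assoc s t z).symm⟩

theorem rle.trans (h₁ : rle x y) (h₂ : rle y z) : rle x z := by
  rcases h₁ with rfl | ⟨s, rfl⟩
  · exact h₂
  · rcases h₂ with rfl | ⟨t, rfl⟩
    · exact Or.inr ⟨s, rfl⟩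
    · exact Or.inr ⟨t * s, mul_assoc z t s⟩

theorem lle.exists_eq_mul_right (h : lle x (y * z)) : ∃ t, x = t * z := by
  rcases h with rfl | ⟨s, rfl⟩
  · exact ⟨y, rfl⟩
  · exact ⟨s * y, (mul_assoc s y z).symm⟩

theorem lle.mul_eq_self_of_isIdempotentElem (h : lle x y) (hy : IsIdempotentElem y) :
    x * y = x := by
  rcases h with rfl | ⟨s, rfl⟩
  · exact hy.eq
  · rw [mul_assoc, hy.eq]

theorem rle.mul_eq_self_of_isIdempotentElem (h : rle x y) (hy : IsIdempotentElem y) :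
    y * x = x := by
  rcases h with rfl | ⟨s, rfl⟩
  · exact hy.eq
  · rw [← mul_assoc, hy.eq]

theorem lle.exists_eq_mul_of_isIdempotentElem (h : lle x y) (hx : IsIdempotentElem x) :
    ∃ t, x = t * y := by
  rcases h with rfl | h
  · exact ⟨x, hx.eq.symm⟩
  · exact h

theorem rle.exists_eq_mul_of_isIdempotentElem (h : rle x y) (hx : IsIdempotentElem x) :
    ∃ s, x = y * s := by
  rcases h with rfl | h
  · exact ⟨x, hx.eq.symm⟩
  · exact h

theorem hrel.refl (x : S) : hrel x x :=
  ⟨⟨Or.inl rfl, Or.inl rfl⟩, ⟨Or.inl rfl, Or.inl rfl⟩⟩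

theorem hrel.symm (h : hrel x y) : hrel y x :=
  ⟨⟨h.1.2, h.1.1⟩, ⟨h.2.2, h.2.1⟩⟩

theorem hrel.trans (h₁ : hrel x y) (h₂ : hrel y z) : hrel x z :=
  ⟨⟨h₁.1.1.trans h₂.1.1, h₂.1.2.trans h₁.1.2⟩, ⟨h₁.2.1.trans h₂.2.1, h₂.2.2.trans h₁.2.2⟩⟩

theorem hClass_eq_of_hrel (h : hrel x y) : hClass x = hClass y := by
  ext z
  exact ⟨fun hz => hz.trans h, fun hz => hz.trans h.symm⟩

end Preorders

section Green

variable {e x : S}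

theorem mem_hClass_of_mul_eq {y : S} (hex : e * x = x) (hxe : x * e = x)
    (hxy : x * y = e) (hyx : y * x = e) : x ∈ hClass e :=
  ⟨⟨Or.inr ⟨x, hxe.symm⟩, Or.inr ⟨y, hyx.symm⟩⟩, ⟨Or.inr ⟨x, hex.symm⟩, Or.inr ⟨y, hxy.symm⟩⟩⟩

theorem mul_eq_self_of_mem_hClass (he : IsIdempotentElem e) (hx : x ∈ hClass e) :
    e * x = x ∧ x * e = x :=
  ⟨hx.2.1.mul_eq_self_of_isIdempotentElem he, hx.1.1.mul_eq_self_of_isIdempotentElem he⟩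

theorem exists_inverse_of_mem_hClass (he : IsIdempotentElem e) (hx : x ∈ hClass e) :
    ∃ y ∈ hClass e, x * y = e ∧ y * x = e := by
  obtain ⟨hex, hxe⟩ := mul_eq_self_of_mem_hClass he hx
  obtain ⟨s, hs⟩ := hx.2.2.exists_eq_mul_of_isIdempotentElem he
  obtain ⟨t, ht⟩ := hx.1.2.exists_eq_mul_of_isIdempotentElem he
  -- `e * s` is a right inverse which equals the left inverse `t * e`
  have hte : t * e = e * s :=
    calc t * e = t * (x * s) := by rw [← hs]
      _ = e * s := by rw [← mul_assoc, ← ht]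
  have hxy : x * (e * s) = e := by rw [← mul_assoc, hxe, hs]
  have hyx : e * s * x = e := by rw [← hte, mul_assoc, hex, ht]
  have hey : e * (e * s) = e * s := by rw [← mul_assoc, he.eq]
  have hye : e * s * e = e * s := by rw [← hte, mul_assoc, he.eq]
  exact ⟨e * s, mem_hClass_of_mul_eq hey hye hyx hxy, hxy, hyx⟩

theorem mul_mem_hClass (he : IsIdempotentElem e) {y : S} (hx : x ∈ hClass e)
    (hy : y ∈ hClass e) : x * y ∈ hClass e := by
  obtain ⟨hex, hxe⟩ := mul_eq_self_of_mem_hClass he hx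
  obtain ⟨hey, hye⟩ := mul_eq_self_of_mem_hClass he hy
  obtain ⟨x', -, hxx', hx'x⟩ := exists_inverse_of_mem_hClass he hx
  obtain ⟨y', -, hyy', hy'y⟩ := exists_inverse_of_mem_hClass he hy
  refine mem_hClass_of_mul_eq (y := y' * x') ?_ ?_ ?_ ?_
  · rw [← mul_assoc, hex]
  · rw [mul_assoc, hye]
  · rw [mul_assoc, ← mul_assoc y, hyy', ← mul_assoc, hxe, hxx']
  · rw [mul_assoc, ← mul_assoc x', hx'x, hey, hy'y]

theorem isGroupSet_hClass_of_isIdempotentElem (he : IsIdempotentElem e) :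
    isGroupSet (hClass e) :=
  ⟨fun _ hx _ hy => mul_mem_hClass he hx hy, e, hrel.refl e,
    fun _ hx => mul_eq_self_of_mem_hClass he hx, fun _ hx => exists_inverse_of_mem_hClass he hx⟩

end Green

namespace invAlong

variable {a d b : S}

theorem mul_mul_self (h : invAlong a d b) : b * a * b = b := by
  obtain ⟨hbad, -, ⟨s, rfl⟩, -⟩ := h
  rw [← mul_assoc, hbad]

theorem isIdempotentElem_mul (h : invAlong a d b) : IsIdempotentElem (b * a) := by
  rw [IsIdempotentElem, ← mul_assoc, h.mul_mul_self]

theorem rrel_mul (h : invAlong a d b) : rrel (d * a) d :=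
  ⟨Or.inr ⟨a, rfl⟩, Or.inr ⟨b, h.2.1.symm⟩⟩

theorem hrel_mul (h : invAlong a d b) : hrel (b * a) (d * a) := by
  have hr := h.rrel_mul
  obtain ⟨hbad, hdab, ⟨s, hs⟩, ⟨t, ht⟩⟩ := h
  refine ⟨⟨Or.inr ⟨t, by rw [ht, mul_assoc]⟩, Or.inr ⟨d * a, by rw [← mul_assoc, hdab]⟩⟩, ?_, ?_⟩
  · exact rle.trans (Or.inr ⟨s * a, by rw [hs, mul_assoc]⟩) hr.2
  · exact hr.1.trans (Or.inr ⟨d, hbad.symm⟩)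

end invAlong

theorem exists_invAlong_of_lrel_of_isGroupSet {a d : S} (hl : lrel (a * d) d)
    (hH : isGroupSet (hClass (a * d))) : ∃ b, invAlong a d b := by
  obtain ⟨-, e, heH, hid, hinv⟩ := hH
  have he : IsIdempotentElem e := (hid e heH).1
  have hde : d * e = d := (hl.2.trans heH.1.2).mul_eq_self_of_isIdempotentElem he
  obtain ⟨c, hcH, hadc, hcad⟩ := hinv (a * d) (hrel.refl _)
  obtain ⟨t, rfl⟩ := hcH.1.1.exists_eq_mul_right
  refine ⟨d * (t * d), ?_, ?_, ⟨t * d, rfl⟩, ⟨d * t, (mul_assoc d t d).symm⟩⟩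
  · calc d * (t * d) * a * d = d * (t * d * (a * d)) := by simp only [mul_assoc]
      _ = d := by rw [hcad, hde]
  · calc d * a * (d * (t * d)) = d * (a * d * (t * d)) := by simp only [mul_assoc]
      _ = d := by rw [hadc, hde]

theorem stmt9 (a d : S) (h1 : lrel (a * d) d) (h2 : isGroupSet (hClass (a * d))) :
    rrel (d * a) d ∧ isGroupSet (hClass (d * a)) := by
  obtain ⟨b, hb⟩ := exists_invAlong_of_lrel_of_isGroupSet h1 h2
  refine ⟨hb.rrel_mul, ?_⟩
  rw [← hClass_eq_of_hrel hb.hrel_mul]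
  exact isGroupSet_hClass_of_isIdempotentElem hb.isIdempotentElem_mul
end

section
/- Let S be a *-semigroup (semigroup with involution) and a ∈ S. Then a has a Moore-Penrose inverse if and only if a is invertible along a*, and in that case the inverse along a* is inner and equals the Moore-Penrose inverse. -/
/-
An inverse `b` of `a` along `a*` satisfies `a* a b = a*` and `b a a* = a*`. Taking adjoints gives
`b* a* a = a` and `a a* b* = a`; substituting these for `a` shows `ab = b* a* = (ab)*`,
`ba = a* b* = (ba)*` and `aba = a`, while `bab = b` because `b ∈ S a*`. Conversely, the
Moore-Penrose equations give `b a a* = (aba)* = a*`, `a* a b = (aba)* = a*`, `b = a* (b* b)` and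
`b = (b b*) a*`, so a Moore-Penrose inverse is an inverse along `a*`.
-/

variable {S : Type*} [Semigroup S]

/-- `b` is a Moore-Penrose inverse of `a` in a `*`-semigroup. -/
def isMP [StarMul S] (a b : S) : Prop :=
  a * b * a = a ∧ b * a * b = b ∧ star (a * b) = a * b ∧ star (b * a) = b * a

theorem invAlong.mul_mul_self_s15 {a d b : S} (h : invAlong a d b) : b * a * b = b := by
  obtain ⟨-, hdab, -, t, rfl⟩ := h
  simpa only [mul_assoc] using congrArg (t * ·) hdab

section StarSemigroup

variable [StarMul S] {a b : S}

theorem star_mul_star_mul_eq_of_star_mul_mul_eq (h : star a * a * b = star a) :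
    star b * star a * a = a := by
  simpa [star_mul, mul_assoc] using congrArg star h

theorem mul_star_mul_star_eq_of_mul_mul_star_eq (h : b * a * star a = star a) :
    a * star a * star b = a := by
  simpa [star_mul, mul_assoc] using congrArg star h

theorem isSelfAdjoint_mul_of_star_mul_mul_eq (h : star a * a * b = star a) :
    IsSelfAdjoint (a * b) := by
  have hab : a * b = star b * star a := by
    calc a * b = star b * star a * a * b := by rw [star_mul_star_mul_eq_of_star_mul_mul_eq h]
      _ = star b * (star a * a * b) := by simp only [mul_assoc]
      _ = star b * star a := by rw [h]
  exact (star_mul a b).trans hab.symm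

theorem isSelfAdjoint_mul_of_mul_mul_star_eq (h : b * a * star a = star a) :
    IsSelfAdjoint (b * a) := by
  have hba : b * a = star a * star b := by
    calc b * a = b * (a * star a * star b) := by rw [mul_star_mul_star_eq_of_mul_mul_star_eq h]
      _ = b * a * star a * star b := by simp only [mul_assoc]
      _ = star a * star b := by rw [h]
  exact (star_mul b a).trans hba.symm

theorem mul_mul_self_of_star_mul_mul_eq (h : star a * a * b = star a) : a * b * a = a := by
  have hstar := star_mul_star_mul_eq_of_star_mul_mul_eq h
  calc a * b * a = star b * star a * a * b * a := by rw [hstar]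
    _ = star b * (star a * a * b) * a := by simp only [mul_assoc]
    _ = a := by rw [h, hstar]

theorem isMP_of_invAlong_star (h : invAlong a (star a) b) : isMP a b :=
  ⟨mul_mul_self_of_star_mul_mul_eq h.2.1, h.mul_mul_self_s15,
    isSelfAdjoint_mul_of_star_mul_mul_eq h.2.1, isSelfAdjoint_mul_of_mul_mul_star_eq h.1⟩

theorem mul_mul_star_eq_of_isSelfAdjoint (haba : a * b * a = a) (hba : IsSelfAdjoint (b * a)) :
    b * a * star a = star a := by
  calc b * a * star a = star (b * a) * star a := by rw [hba.star_eq]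
    _ = star (a * b * a) := by rw [← star_mul, mul_assoc]
    _ = star a := by rw [haba]

theorem star_mul_mul_eq_of_isSelfAdjoint (haba : a * b * a = a) (hab : IsSelfAdjoint (a * b)) :
    star a * a * b = star a := by
  calc star a * a * b = star a * star (a * b) := by rw [hab.star_eq, mul_assoc]
    _ = star (a * b * a) := by rw [← star_mul]
    _ = star a := by rw [haba]

theorem isMP.invAlong_star (h : isMP a b) : invAlong a (star a) b := by
  obtain ⟨haba, hbab, hab, hba⟩ := h
  have hab' : a * b = star b * star a := by rw [← hab, star_mul]
  have hba' : b * a = star a * star b := by rw [← hba, star_mul]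
  refine ⟨mul_mul_star_eq_of_isSelfAdjoint haba hba, star_mul_mul_eq_of_isSelfAdjoint haba hab,
    ⟨star b * b, ?_⟩, ⟨b * star b, ?_⟩⟩
  · rw [← mul_assoc, ← hba', hbab]
  · rw [mul_assoc, ← hab', ← mul_assoc, hbab]

end StarSemigroup

theorem stmt15 [StarMul S] (a : S) :
    ((∃ b, isMP a b) ↔ (∃ b, invAlong a (star a) b)) ∧
    (∀ b, invAlong a (star a) b → (a * b * a = a ∧ isMP a b)) :=
  ⟨⟨fun ⟨b, hb⟩ => ⟨b, hb.invAlong_star⟩, fun ⟨b, hb⟩ => ⟨b, isMP_of_invAlong_star hb⟩⟩,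
    fun _ hb => ⟨(isMP_of_invAlong_star hb).1, isMP_of_invAlong_star hb⟩⟩
end

section
/- Let S be a semigroup and a ∈ S. A group inverse of a exists if and only if a² H a (a² and a are Green H-related), and in that case the group inverse a^♯ lies in the bicommutant of {a}. -/
variable {S : Type*} [Semigroup S]

/-!
If `b` is a group inverse of `a`, then `a = b a²` and `a = a² b`, so `a² H a`. Conversely, from
`a = s a²` and `a = a² t` one gets `s a = s a² t = a t`, and `s a t` is a group inverse of `a`.
If `c` commutes with `a`, it commutes with the idempotent `e = a b`, since `e c = e c e = c e`;
then `b c = b e c = b c e = e c b = c b`.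
-/

def IsGroupInverse (a b : S) : Prop :=
  a * b * a = a ∧ b * a * b = b ∧ Commute a b

namespace IsGroupInverse

variable {a b c : S}

theorem mul_mul_eq (h : IsGroupInverse a b) : a * (a * b) = a := by
  rw [h.2.2.eq, ← mul_assoc, h.1]

theorem mul_mul_eq_inverse (h : IsGroupInverse a b) : a * b * b = b := by
  rw [h.2.2.eq, h.2.1]

theorem inverse_mul_mul_eq (h : IsGroupInverse a b) : b * (a * b) = b := by
  rw [← mul_assoc, h.2.1]

theorem hrel_mul_self (h : IsGroupInverse a b) : hrel (a * a) a := by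
  refine ⟨⟨.inr ⟨a, rfl⟩, .inr ⟨b, ?_⟩⟩, .inr ⟨a, rfl⟩, .inr ⟨b, ?_⟩⟩
  · rw [← mul_assoc, ← h.2.2.eq, h.1]
  · rw [mul_assoc, h.mul_mul_eq]

theorem commute_mul_of_commute (h : IsGroupInverse a b) (hc : Commute c a) :
    Commute c (a * b) := by
  have hece : a * b * c * (a * b) = c * (a * b) :=
    calc a * b * c * (a * b) = a * b * (c * a) * b := by simp only [mul_assoc]
      _ = a * b * a * (c * b) := by rw [hc.eq]; simp only [mul_assoc]
      _ = c * (a * b) := by rw [h.1, ← mul_assoc, ← hc.eq, mul_assoc]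
  have heec : a * b * c * (a * b) = a * b * c :=
    calc a * b * c * (a * b) = b * (c * a) * (a * b) := by
          rw [h.2.2.eq, hc.eq]; simp only [mul_assoc]
      _ = b * c * (a * (a * b)) := by simp only [mul_assoc]
      _ = a * b * c := by rw [h.mul_mul_eq, mul_assoc, hc.eq, ← mul_assoc, h.2.2.eq]
  exact hece.symm.trans heec

theorem commute_of_commute (h : IsGroupInverse a b) (hc : Commute c a) : Commute c b := by
  have he := h.commute_mul_of_commute hc
  calc c * b = c * (a * b) * b := by rw [mul_assoc, h.mul_mul_eq_inverse]
    _ = a * b * (c * b) := by rw [he.eq, mul_assoc]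
    _ = b * (c * a) * b := by rw [h.2.2.eq, hc.eq]; simp only [mul_assoc]
    _ = b * (c * (a * b)) := by simp only [mul_assoc]
    _ = b * c := by rw [he.eq, ← mul_assoc, h.inverse_mul_mul_eq]

end IsGroupInverse

theorem exists_eq_mul_mul_self_of_lle {a : S} (h : lle a (a * a)) : ∃ s, a = s * (a * a) := by
  rcases h with h | h
  · exact ⟨a, by rwa [← h]⟩
  · exact h

theorem exists_eq_mul_self_mul_of_rle {a : S} (h : rle a (a * a)) : ∃ t, a = a * a * t := by
  rcases h with h | h
  · exact ⟨a, by rwa [← h]⟩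
  · exact h

theorem isGroupInverse_of_eq_mul_mul_self {a s t : S} (hs : a = s * (a * a))
    (ht : a = a * a * t) : IsGroupInverse a (s * a * t) := by
  have hsat : s * a = a * t :=
    calc s * a = s * (a * a * t) := by rw [← ht]
      _ = s * (a * a) * t := by simp only [mul_assoc]
      _ = a * t := by rw [← hs]
  have hasa : a * (s * a) = a := by rw [hsat, ← mul_assoc, ← ht]
  have hata : a * t * a = a := by rw [← hsat, mul_assoc, ← hs]
  have hleft : a * (s * a * t) = a * t := by rw [← mul_assoc, hasa]
  have hright : s * a * t * a = s * a := by rw [mul_assoc s a t, mul_assoc, hata]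
  refine ⟨by rw [hleft, hata], ?_, ?_⟩
  · rw [hright, mul_assoc s a, ← mul_assoc a, hasa, mul_assoc]
  · rw [Commute, SemiconjBy, hleft, hright, hsat]

theorem exists_isGroupInverse_iff_hrel_mul_self (a : S) :
    (∃ b, IsGroupInverse a b) ↔ hrel (a * a) a := by
  refine ⟨fun ⟨b, hb⟩ => hb.hrel_mul_self, fun ⟨⟨_, hl⟩, _, hr⟩ => ?_⟩
  obtain ⟨s, hs⟩ := exists_eq_mul_mul_self_of_lle hl
  obtain ⟨t, ht⟩ := exists_eq_mul_self_mul_of_rle hr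
  exact ⟨_, isGroupInverse_of_eq_mul_mul_self hs ht⟩

theorem stmt17 (a : S) :
    ((∃ b, a * b * a = a ∧ b * a * b = b ∧ a * b = b * a) ↔ hrel (a * a) a) ∧
    (∀ b, (a * b * a = a ∧ b * a * b = b ∧ a * b = b * a) →
      ∀ c, c * a = a * c → c * b = b * c) :=
  ⟨exists_isGroupInverse_iff_hrel_mul_self a,
    fun _ hb _ hc => IsGroupInverse.commute_of_commute hb hc⟩
end
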